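/- Let τ ∈ T with Im τ > 0. If ξ_1, ξ_2 ∈ M_τ(QC) agree on the subalgebra Q̃C of even quasicontinuous functions, then ξ_1 = ξ_2. -/

import Mathlib

open MeasureTheory Real Filter Topology

noncomputable section

/-- The `n`-th Fourier coefficient of `f : ℝ → ℂ` (representing `x ↦ f(e^{ix})`). -/
def fourierCoef (f : ℝ → ℂ) (n : ℤ) : ℂ :=
  (1 / (2 * π)) * ∫ x in (0 : ℝ)..(2 * π), f x * Complex.exp (-(Complex.I * n * x))

/-- `L^∞(T)`, modeled as bounded measurable `2π`-periodic functions `ℝ → ℂ`. -/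
def LinfT : Set (ℝ → ℂ) :=
  {f | Function.Periodic f (2 * π) ∧ Measurable f ∧ ∃ C, ∀ x, ‖f x‖ ≤ C}

/-- `C(T)`: continuous `2π`-periodic functions. -/
def CtsT : Set (ℝ → ℂ) := {f | Function.Periodic f (2 * π) ∧ Continuous f}

/-- The Hardy space `H^∞`: bounded functions whose negative Fourier coefficients vanish. -/
def HinfT : Set (ℝ → ℂ) := {f ∈ LinfT | ∀ n : ℤ, n < 0 → fourierCoef f n = 0}

/-- The conjugate Hardy space: bounded functions whose positive Fourier coefficients vanish. -/
def HinfBarT : Set (ℝ → ℂ) := {f ∈ LinfT | ∀ n : ℤ, 0 < n → fourierCoef f n = 0}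

/-- The quasicontinuous functions `QC = (C + H^∞) ∩ (C + conj(H^∞))`. -/
def QCset : Set (ℝ → ℂ) :=
  {f | (∃ c ∈ CtsT, ∃ h ∈ HinfT, f = c + h) ∧ (∃ c ∈ CtsT, ∃ h ∈ HinfBarT, f = c + h)}

/-- The flip `q̃(t) = q(1/t)`, i.e. `q̃(e^{ix}) = q(e^{-ix})`. -/
def flipF (f : ℝ → ℂ) : ℝ → ℂ := fun x => f (-x)

/-- The even quasicontinuous functions `Q̃C = {q ∈ QC : q = q̃}`. -/
def tQCset : Set (ℝ → ℂ) := {f ∈ QCset | flipF f = f}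

/-- The even continuous functions `C̃(T)`. -/
def evContT : Set (ℝ → ℂ) := {f ∈ CtsT | flipF f = f}

/-- The piecewise continuous functions `PC`: `2π`-periodic functions having one-sided
limits at every point. -/
def PCset : Set (ℝ → ℂ) :=
  {p | Function.Periodic p (2 * π) ∧
    ∀ θ : ℝ, (∃ l : ℂ, Tendsto p (𝓝[>] θ) (𝓝 l)) ∧ (∃ l : ℂ, Tendsto p (𝓝[<] θ) (𝓝 l))}

/-- `ξ` is a character (multiplicative linear functional of norm `1`) of the subalgebra of
`L^∞(T)` whose underlying set is `S`; only the values of `ξ` on `S` are relevant. -/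
def IsChar (S : Set (ℝ → ℂ)) (ξ : (ℝ → ℂ) → ℂ) : Prop :=
  (∀ p ∈ S, ∀ q ∈ S, ξ (p + q) = ξ p + ξ q) ∧
  (∀ p ∈ S, ∀ q ∈ S, ξ (p * q) = ξ p * ξ q) ∧
  (∀ (c : ℂ), ∀ q ∈ S, ξ (c • q) = c * ξ q) ∧
  ξ 1 = 1 ∧
  (∀ q ∈ S, ∀ C : ℝ, (∀ x, ‖q x‖ ≤ C) → ‖ξ q‖ ≤ C)

/-- The moving average `δ_{λ,τ}(a) = (λ/2π) ∫_{θ-π/λ}^{θ+π/λ} a(e^{ix}) dx`, `τ = e^{iθ}`. -/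
def movAvg (a : ℝ → ℂ) (lam θ : ℝ) : ℂ :=
  (lam / (2 * π)) * ∫ x in (θ - π / lam)..(θ + π / lam), a x

/-- `ξ ∈ M_τ^0(S)` (`τ = e^{iθ}`): `ξ` is a character of (the algebra with underlying set) `S`
lying in the weak-* closure of the moving-average functionals `{δ_{λ,τ} : λ ∈ [1,∞)}`. -/
def InM0 (S : Set (ℝ → ℂ)) (θ : ℝ) (ξ : (ℝ → ℂ) → ℂ) : Prop :=
  IsChar S ξ ∧
  ∀ qs : List (ℝ → ℂ), (∀ q ∈ qs, q ∈ S) → ∀ ε : ℝ, 0 < ε →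
    ∃ lam : ℝ, 1 ≤ lam ∧ ∀ q ∈ qs, ‖ξ q - movAvg q lam θ‖ < ε

/-- `ξ ∈ M_τ(S)` (`τ = e^{iθ}`): the fiber condition `ξ(f) = f(τ)` for all continuous `f`
belonging to `S`. -/
def InFiber (S : Set (ℝ → ℂ)) (θ : ℝ) (ξ : (ℝ → ℂ) → ℂ) : Prop :=
  IsChar S ξ ∧ ∀ f ∈ CtsT ∩ S, ξ f = f θ

/-- `ξ ∈ M_τ^+(QC)`: `ξ(f) = 0` whenever `limsup_{t→τ+0}|f(t)| = 0`, `f ∈ QC`. -/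
def InMplus (θ : ℝ) (ξ : (ℝ → ℂ) → ℂ) : Prop :=
  IsChar QCset ξ ∧
  ∀ f ∈ QCset, Filter.limsup (fun x => ‖f x‖) (𝓝[>] θ) = 0 → ξ f = 0

/-- `ξ ∈ M_τ^-(QC)`: `ξ(f) = 0` whenever `limsup_{t→τ-0}|f(t)| = 0`, `f ∈ QC`. -/
def InMminus (θ : ℝ) (ξ : (ℝ → ℂ) → ℂ) : Prop :=
  IsChar QCset ξ ∧
  ∀ f ∈ QCset, Filter.limsup (fun x => ‖f x‖) (𝓝[<] θ) = 0 → ξ f = 0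

/-- The conjugate character `ξ'(q) = ξ(q̃)`. -/
def conjChar (ξ : (ℝ → ℂ) → ℂ) : (ℝ → ℂ) → ℂ := fun q => ξ (flipF q)

/-!
Let `c` be a power of the cosine bump `(1 + cos (x - θ)) / 2`: a trigonometric polynomial close
to `1` near `θ` and, because `sin θ ≠ 0`, small near `-θ`. Since `C + H^∞` is stable under
multiplication by `e^{±ix}`, `QC` is a module over the trigonometric polynomials, so
`q̄ = q c + (q c)~` is even and quasicontinuous, while `q - q̄` is small near `θ`.
A character `ξ` over `θ` has `ξ f = ξ (f g)` whenever `g` is a trigonometric polynomial with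
`g θ = 1`; taking for `g` a much higher power of the bump gives `‖ξ (q - q̄)‖ ≤ sup ‖(q - q̄) g‖`,
which is small. As `ξ₁ q - ξ₂ q = ξ₁ (q - q̄) - ξ₂ (q - q̄)`, the two characters agree on `q`.
-/

def expI (k : ℤ) : ℝ → ℂ := fun x => Complex.exp (Complex.I * k * x)

lemma expI_zero : expI 0 = 1 := by
  funext x; simp [expI]

lemma expI_add (k l : ℤ) : expI (k + l) = expI k * expI l := by
  funext x
  simp only [expI, Pi.mul_apply, ← Complex.exp_add]
  push_cast
  ring_nf

lemma flipF_expI (k : ℤ) : flipF (expI k) = expI (-k) := by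
  funext x
  simp only [flipF, expI]
  push_cast
  ring_nf

lemma expI_periodic (k : ℤ) : Function.Periodic (expI k) (2 * π) := by
  intro x
  simp only [expI]
  push_cast
  rw [show Complex.I * k * (x + 2 * π) = Complex.I * k * x + k * (2 * π * Complex.I) by ring,
    Complex.exp_add, Complex.exp_int_mul_two_pi_mul_I, mul_one]

lemma expI_mem_CtsT (k : ℤ) : expI k ∈ CtsT :=
  ⟨expI_periodic k, by unfold expI; fun_prop⟩

lemma flipF_periodic {f : ℝ → ℂ} {T : ℝ} (hf : Function.Periodic f T) :
    Function.Periodic (flipF f) T := fun x => by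
  simp only [flipF, neg_add, ← sub_eq_add_neg, hf.sub_eq]

lemma flipF_add (f g : ℝ → ℂ) : flipF (f + g) = flipF f + flipF g := rfl

lemma flipF_mul (f g : ℝ → ℂ) : flipF (f * g) = flipF f * flipF g := rfl

lemma flipF_flipF (f : ℝ → ℂ) : flipF (flipF f) = f := by
  funext x; simp [flipF]

def linfSubalgebra : Subalgebra ℂ (ℝ → ℂ) where
  carrier := LinfT
  mul_mem' := by
    rintro f g ⟨hfT, hfm, C, hC⟩ ⟨hgT, hgm, D, hD⟩
    exact ⟨hfT.mul hgT, hfm.mul hgm, C * D, fun x => by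
      rw [Pi.mul_apply, norm_mul]
      exact mul_le_mul (hC x) (hD x) (norm_nonneg _) ((norm_nonneg _).trans (hC x))⟩
  add_mem' := by
    rintro f g ⟨hfT, hfm, C, hC⟩ ⟨hgT, hgm, D, hD⟩
    exact ⟨hfT.add hgT, hfm.add hgm, C + D, fun x =>
      (norm_add_le _ _).trans (add_le_add (hC x) (hD x))⟩
  algebraMap_mem' r := ⟨fun _ => rfl, measurable_const, ‖r‖, fun _ => le_rfl⟩

def ctsSubalgebra : Subalgebra ℂ (ℝ → ℂ) where
  carrier := CtsT
  mul_mem' hf hg := ⟨hf.1.mul hg.1, hf.2.mul hg.2⟩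
  add_mem' hf hg := ⟨hf.1.add hg.1, hf.2.add hg.2⟩
  algebraMap_mem' _ := ⟨fun _ => rfl, continuous_const⟩

lemma CtsT_subset_LinfT : CtsT ⊆ LinfT := by
  rintro f ⟨hT, hc⟩
  obtain ⟨C, hC⟩ :=
    (isCompact_Icc (a := 0) (b := 2 * π)).exists_bound_of_continuousOn hc.continuousOn
  refine ⟨hT, hc.measurable, C, fun x => ?_⟩
  obtain ⟨y, hy, hxy⟩ := hT.exists_mem_Ico₀ two_pi_pos x
  exact hxy ▸ hC y (Set.Ico_subset_Icc_self hy)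

lemma intervalIntegrable_of_mem_LinfT {f : ℝ → ℂ} (hf : f ∈ LinfT) (a b : ℝ) :
    IntervalIntegrable f volume a b := by
  obtain ⟨-, hm, C, hC⟩ := hf
  rw [intervalIntegrable_iff]
  exact .of_bound measure_Ioc_lt_top hm.aestronglyMeasurable C (.of_forall hC)

lemma fourierCoef_eq_integral_mul_expI (f : ℝ → ℂ) (n : ℤ) :
    fourierCoef f n = 1 / (2 * π) * ∫ x in (0 : ℝ)..(2 * π), (f * expI (-n)) x := by
  simp only [fourierCoef, expI, Pi.mul_apply, Int.cast_neg, neg_mul, mul_neg]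

lemma fourierCoef_add {f g : ℝ → ℂ} (hf : f ∈ LinfT) (hg : g ∈ LinfT) (n : ℤ) :
    fourierCoef (f + g) n = fourierCoef f n + fourierCoef g n := by
  have hexp : expI (-n) ∈ linfSubalgebra := CtsT_subset_LinfT (expI_mem_CtsT _)
  simp only [fourierCoef_eq_integral_mul_expI, add_mul, Pi.add_apply, ← mul_add]
  rw [intervalIntegral.integral_add]
  · exact intervalIntegrable_of_mem_LinfT (mul_mem (show f ∈ linfSubalgebra from hf) hexp) _ _
  · exact intervalIntegrable_of_mem_LinfT (mul_mem (show g ∈ linfSubalgebra from hg) hexp) _ _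

lemma fourierCoef_smul (a : ℂ) (f : ℝ → ℂ) (n : ℤ) :
    fourierCoef (a • f) n = a * fourierCoef f n := by
  simp only [fourierCoef_eq_integral_mul_expI, smul_mul_assoc, Pi.smul_apply, smul_eq_mul,
    intervalIntegral.integral_const_mul]
  ring

lemma fourierCoef_zero (n : ℤ) : fourierCoef 0 n = 0 := by
  simpa using fourierCoef_smul 0 0 n

lemma fourierCoef_mul_expI (f : ℝ → ℂ) (k n : ℤ) :
    fourierCoef (f * expI k) n = fourierCoef f (n - k) := by
  rw [fourierCoef_eq_integral_mul_expI, fourierCoef_eq_integral_mul_expI, mul_assoc, ← expI_add]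
  ring_nf

lemma fourierCoef_one (n : ℤ) : fourierCoef 1 n = if n = 0 then 1 else 0 := by
  rw [fourierCoef_eq_integral_mul_expI, one_mul]
  split_ifs with hn
  · simp [hn, expI_zero, field]
  · have hc : Complex.I * ((-n : ℤ) : ℂ) ≠ 0 := by simpa using hn
    simp only [expI]
    rw [integral_exp_mul_complex hc]
    have hperiod : Complex.exp (Complex.I * ((-n : ℤ) : ℂ) * ((2 * π : ℝ) : ℂ)) = 1 := by
      rw [← Complex.exp_int_mul_two_pi_mul_I (-n)]
      push_cast
      ring_nf
    rw [hperiod, Complex.ofReal_zero, mul_zero, Complex.exp_zero, sub_self, zero_div, mul_zero]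

lemma fourierCoef_flipF {f : ℝ → ℂ} (hf : Function.Periodic f (2 * π)) (n : ℤ) :
    fourierCoef (flipF f) n = fourierCoef f (-n) := by
  rw [fourierCoef_eq_integral_mul_expI, fourierCoef_eq_integral_mul_expI, neg_neg,
    ← flipF_expI, ← flipF_mul]
  congr 1
  simp only [flipF]
  rw [intervalIntegral.integral_comp_neg (fun x => (f * expI n) x), neg_zero]
  simpa using (hf.mul (expI_periodic n)).intervalIntegral_add_eq (-(2 * π)) 0

/-- `H^∞ = vanishingFourierOn {n < 0}` and `conj(H^∞) = vanishingFourierOn {0 < n}`. -/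
def vanishingFourierOn (N : Set ℤ) : Submodule ℂ (ℝ → ℂ) where
  carrier := {f ∈ LinfT | ∀ n ∈ N, fourierCoef f n = 0}
  add_mem' hf hg := ⟨add_mem (show _ ∈ linfSubalgebra from hf.1) hg.1, fun n hn => by
    rw [fourierCoef_add hf.1 hg.1, hf.2 n hn, hg.2 n hn, add_zero]⟩
  zero_mem' := ⟨zero_mem linfSubalgebra, fun n _ => fourierCoef_zero n⟩
  smul_mem' a _ hf := ⟨Subalgebra.smul_mem linfSubalgebra hf.1 a, fun n hn => by
    rw [fourierCoef_smul, hf.2 n hn, mul_zero]⟩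

def cAdd (N : Set ℤ) : Submodule ℂ (ℝ → ℂ) :=
  Subalgebra.toSubmodule ctsSubalgebra ⊔ vanishingFourierOn N

lemma mem_QCset_iff {f : ℝ → ℂ} : f ∈ QCset ↔ f ∈ cAdd {n | n < 0} ∧ f ∈ cAdd {n | 0 < n} := by
  simp only [QCset, cAdd, Submodule.mem_sup, Subalgebra.mem_toSubmodule, eq_comm]
  exact Iff.rfl

lemma QCset_add {f g : ℝ → ℂ} (hf : f ∈ QCset) (hg : g ∈ QCset) : f + g ∈ QCset := by
  rw [mem_QCset_iff] at *
  exact ⟨add_mem hf.1 hg.1, add_mem hf.2 hg.2⟩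

lemma QCset_smul (a : ℂ) {f : ℝ → ℂ} (hf : f ∈ QCset) : a • f ∈ QCset := by
  rw [mem_QCset_iff] at *
  exact ⟨Submodule.smul_mem _ a hf.1, Submodule.smul_mem _ a hf.2⟩

lemma QCset_sub {f g : ℝ → ℂ} (hf : f ∈ QCset) (hg : g ∈ QCset) : f - g ∈ QCset := by
  simpa [sub_eq_add_neg] using QCset_add hf (QCset_smul (-1) hg)

lemma CtsT_subset_QCset : CtsT ⊆ QCset := fun f hf =>
  mem_QCset_iff.2 ⟨Submodule.mem_sup_left (show f ∈ ctsSubalgebra from hf),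
    Submodule.mem_sup_left (show f ∈ ctsSubalgebra from hf)⟩

lemma QCset_subset_LinfT : QCset ⊆ LinfT := fun _ hf =>
  (sup_le (fun _ hc => CtsT_subset_LinfT hc) (fun _ hh => hh.1) : cAdd {n | n < 0} ≤
    Subalgebra.toSubmodule linfSubalgebra) (mem_QCset_iff.1 hf).1

lemma flipF_mem_vanishingFourierOn {N N' : Set ℤ} {f : ℝ → ℂ} (hf : f ∈ vanishingFourierOn N)
    (hN : ∀ n ∈ N', -n ∈ N) : flipF f ∈ vanishingFourierOn N' := by
  obtain ⟨⟨hT, hm, C, hC⟩, hcoef⟩ := hf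
  refine ⟨⟨flipF_periodic hT, hm.comp measurable_neg, C, fun x => hC (-x)⟩, fun n hn => ?_⟩
  rw [fourierCoef_flipF hT, hcoef _ (hN n hn)]

lemma flipF_mem_cAdd {N N' : Set ℤ} {f : ℝ → ℂ} (hf : f ∈ cAdd N) (hN : ∀ n ∈ N', -n ∈ N) :
    flipF f ∈ cAdd N' := by
  obtain ⟨c, hc, h, hh, rfl⟩ := Submodule.mem_sup.1 hf
  exact Submodule.mem_sup.2 ⟨flipF c, ⟨flipF_periodic hc.1, hc.2.comp continuous_neg⟩,
    flipF h, flipF_mem_vanishingFourierOn hh hN, rfl⟩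

lemma flipF_mem_QCset {f : ℝ → ℂ} (hf : f ∈ QCset) : flipF f ∈ QCset := by
  rw [mem_QCset_iff] at *
  exact ⟨flipF_mem_cAdd hf.2 fun n (hn : n < 0) => show 0 < -n by omega,
    flipF_mem_cAdd hf.1 fun n (hn : 0 < n) => show -n < 0 by omega⟩

lemma mul_expI_mem_vanishingFourierOn {N N' : Set ℤ} {f : ℝ → ℂ}
    (hf : f ∈ vanishingFourierOn N) {k : ℤ} (hN : ∀ n ∈ N', n - k ∈ N) :
    f * expI k ∈ vanishingFourierOn N' :=
  ⟨mul_mem (show f ∈ linfSubalgebra from hf.1) (CtsT_subset_LinfT (expI_mem_CtsT k)),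
    fun n hn => by rw [fourierCoef_mul_expI, hf.2 _ (hN n hn)]⟩

/-- Multiplying by `e^{-ix}` moves the coefficient `ĥ(0)` to the place `-1`; subtracting it
keeps the product in `H^∞`. -/
lemma mul_expI_neg_one_mem_cAdd {h : ℝ → ℂ} (hh : h ∈ vanishingFourierOn {n | n < 0}) :
    h * expI (-1) ∈ cAdd {n | n < 0} := by
  set a := fourierCoef h 0
  have hsplit : h * expI (-1) = a • expI (-1) + (h + (-a) • 1) * expI (-1) := by
    rw [add_mul, smul_mul_assoc, one_mul, neg_smul]; abel
  have hconst : (-a) • (1 : ℝ → ℂ) ∈ linfSubalgebra := Subalgebra.smul_mem _ (one_mem _) _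
  have hlow : h + (-a) • 1 ∈ vanishingFourierOn {n | n ≤ 0} := by
    refine ⟨add_mem (show h ∈ linfSubalgebra from hh.1) hconst, fun n hn => ?_⟩
    rw [fourierCoef_add hh.1 hconst, fourierCoef_smul, fourierCoef_one]
    rcases (show n ≤ 0 from hn).lt_or_eq with hn | rfl
    · rw [hh.2 n hn, if_neg hn.ne]; ring
    · simp [a]
  rw [hsplit]
  refine add_mem (Submodule.mem_sup_left
    (Subalgebra.smul_mem ctsSubalgebra (expI_mem_CtsT (-1)) a)) (Submodule.mem_sup_right ?_)
  exact mul_expI_mem_vanishingFourierOn hlow fun n (hn : n < 0) => show n - -1 ≤ 0 by omega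

lemma mul_expI_mem_cAdd_of_eq_one_or_eq_neg_one {f : ℝ → ℂ} (hf : f ∈ cAdd {n | n < 0})
    {j : ℤ} (hj : j = 1 ∨ j = -1) : f * expI j ∈ cAdd {n | n < 0} := by
  obtain ⟨c, hc, h, hh, rfl⟩ := Submodule.mem_sup.1 hf
  rw [add_mul]
  refine add_mem (Submodule.mem_sup_left
    (mul_mem (show c ∈ ctsSubalgebra from hc) (expI_mem_CtsT j) : c * expI j ∈ ctsSubalgebra)) ?_
  rcases hj with rfl | rfl
  · exact Submodule.mem_sup_right
      (mul_expI_mem_vanishingFourierOn hh fun n (hn : n < 0) => show n - 1 < 0 by omega)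
  · exact mul_expI_neg_one_mem_cAdd hh

lemma mul_expI_mem_cAdd {f : ℝ → ℂ} (hf : f ∈ cAdd {n | n < 0}) (k : ℤ) :
    f * expI k ∈ cAdd {n | n < 0} := by
  induction k using Int.induction_on with
  | zero => rwa [expI_zero, mul_one]
  | succ k ih =>
    rw [expI_add, ← mul_assoc]
    exact mul_expI_mem_cAdd_of_eq_one_or_eq_neg_one ih (.inl rfl)
  | pred k ih =>
    rw [sub_eq_add_neg, expI_add, ← mul_assoc]
    exact mul_expI_mem_cAdd_of_eq_one_or_eq_neg_one ih (.inr rfl)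

lemma QCset_mul_expI {f : ℝ → ℂ} (hf : f ∈ QCset) (k : ℤ) : f * expI k ∈ QCset := by
  rw [mem_QCset_iff] at *
  refine ⟨mul_expI_mem_cAdd hf.1 k, ?_⟩
  have hflip := mul_expI_mem_cAdd
    (flipF_mem_cAdd hf.2 fun n (hn : n < 0) => show 0 < -n by omega) (-k)
  rw [← flipF_expI, ← flipF_mul] at hflip
  rw [← flipF_flipF (f * expI k)]
  exact flipF_mem_cAdd hflip fun n (hn : 0 < n) => show -n < 0 by omega

def trigPoly : Subalgebra ℂ (ℝ → ℂ) := Algebra.adjoin ℂ (Set.range expI)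

lemma trigPoly_le_ctsSubalgebra : trigPoly ≤ ctsSubalgebra :=
  Algebra.adjoin_le (Set.range_subset_iff.2 expI_mem_CtsT)

lemma QCset_mul_trigPoly {c : ℝ → ℂ} (hc : c ∈ trigPoly) {f : ℝ → ℂ} (hf : f ∈ QCset) :
    f * c ∈ QCset := by
  induction hc using Algebra.adjoin_induction generalizing f with
  | mem x hx =>
    obtain ⟨k, rfl⟩ := hx
    exact QCset_mul_expI hf k
  | algebraMap r =>
    rw [mul_comm, Algebra.algebraMap_eq_smul_one, smul_mul_assoc, one_mul]
    exact QCset_smul r hf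
  | add x y _ _ hx hy =>
    rw [mul_add]
    exact QCset_add (hx hf) (hy hf)
  | mul x y _ _ hx hy =>
    rw [← mul_assoc]
    exact hy (hx hf)

def cosBump (θ x : ℝ) : ℝ := (1 + Real.cos (x - θ)) / 2

lemma cosBump_nonneg (θ x : ℝ) : 0 ≤ cosBump θ x := by
  unfold cosBump; linarith [Real.neg_one_le_cos (x - θ)]

lemma cosBump_le_one (θ x : ℝ) : cosBump θ x ≤ 1 := by
  unfold cosBump; linarith [Real.cos_le_one (x - θ)]

lemma continuous_cosBump (θ : ℝ) : Continuous (cosBump θ) := by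
  unfold cosBump; fun_prop

lemma cosBump_periodic (θ : ℝ) : Function.Periodic (cosBump θ) (2 * π) := fun x => by
  simp only [cosBump, add_sub_right_comm, Real.cos_add_two_pi]

lemma cosBump_neg_self_lt_one {θ : ℝ} (hθ : Real.sin θ ≠ 0) : cosBump θ (-θ) < 1 := by
  have hcos : Real.cos (-θ - θ) = 1 - 2 * Real.sin θ ^ 2 := by
    rw [show -θ - θ = -(2 * θ) by ring, Real.cos_neg, Real.cos_two_mul, Real.cos_sq']
    ring
  unfold cosBump
  nlinarith [pow_pos (sq_pos_of_ne_zero hθ) 1]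

lemma exists_eq_add_of_cosBump_eq_one {θ x : ℝ} (h : cosBump θ x = 1) :
    ∃ k : ℤ, x = θ + k * (2 * π) := by
  obtain ⟨k, hk⟩ := (Real.cos_eq_one_iff (x - θ)).1 (by unfold cosBump at h; linarith)
  exact ⟨k, by linarith⟩

def cosBumpPow (θ : ℝ) (m : ℕ) : ℝ → ℂ := fun x => ((cosBump θ x ^ m : ℝ) : ℂ)

lemma cosBumpPow_mem_trigPoly (θ : ℝ) (m : ℕ) : cosBumpPow θ m ∈ trigPoly := by
  have hrepr : (fun x => ((cosBump θ x : ℝ) : ℂ)) = algebraMap ℂ (ℝ → ℂ) (1 / 2)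
      + (Complex.exp (-(Complex.I * θ)) / 4) • expI 1
      + (Complex.exp (Complex.I * θ) / 4) • expI (-1) := by
    funext x
    simp only [cosBump, Pi.add_apply, Pi.smul_apply, smul_eq_mul, expI,
      Algebra.algebraMap_eq_smul_one, Pi.one_apply, mul_one]
    push_cast
    rw [Complex.cos,
      show ((x : ℂ) - θ) * Complex.I = -(Complex.I * θ) + Complex.I * 1 * x by ring,
      show -((x : ℂ) - θ) * Complex.I = Complex.I * θ + Complex.I * -1 * x by ring,
      Complex.exp_add, Complex.exp_add]
    ring
  have hbump : (fun x => ((cosBump θ x : ℝ) : ℂ)) ∈ trigPoly := by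
    rw [hrepr]
    refine add_mem (add_mem (algebraMap_mem _ _) (Subalgebra.smul_mem _ ?_ _))
      (Subalgebra.smul_mem _ ?_ _) <;> exact Algebra.subset_adjoin ⟨_, rfl⟩
  convert pow_mem hbump m using 1
  funext x
  simp [cosBumpPow]

lemma cosBumpPow_self (θ : ℝ) (m : ℕ) : cosBumpPow θ m θ = 1 := by
  simp [cosBumpPow, cosBump]

lemma norm_cosBumpPow (θ : ℝ) (m : ℕ) (x : ℝ) : ‖cosBumpPow θ m x‖ = cosBump θ x ^ m := by
  rw [cosBumpPow, Complex.norm_real, Real.norm_of_nonneg (pow_nonneg (cosBump_nonneg θ x) m)]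

lemma norm_one_sub_cosBumpPow_le (θ : ℝ) (m : ℕ) (x : ℝ) : ‖1 - cosBumpPow θ m x‖ ≤ 1 := by
  have h0 := pow_nonneg (cosBump_nonneg θ x) m
  have h1 := pow_le_one₀ (cosBump_nonneg θ x) (cosBump_le_one θ x) (n := m)
  rw [cosBumpPow, ← Complex.ofReal_one, ← Complex.ofReal_sub, Complex.norm_real,
    Real.norm_of_nonneg (by linarith)]
  linarith

lemma exists_lt_forall_le_of_periodic {T ε a : ℝ} (hT : 0 < T) {b h : ℝ → ℝ}
    (hb : Continuous b) (hbT : Function.Periodic b T) (hh : Continuous h)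
    (hhT : Function.Periodic h T) (hlt : ∀ x, ε ≤ h x → b x < a) :
    ∃ r < a, ∀ x, ε ≤ h x → b x ≤ r := by
  set K := Set.Icc 0 T ∩ {x | ε ≤ h x}
  have hbhT : Function.Periodic (fun x => (b x, h x)) T := fun x => by simp only [hbT x, hhT x]
  have hreduce : ∀ x, ε ≤ h x → ∃ y ∈ K, b x = b y := fun x hx => by
    obtain ⟨y, hy, hxy⟩ := hbhT.exists_mem_Ico₀ hT x
    obtain ⟨hbxy, hhxy⟩ := Prod.mk.inj hxy
    exact ⟨y, ⟨Set.Ico_subset_Icc_self hy, show ε ≤ h y from hhxy ▸ hx⟩, hbxy⟩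
  by_cases hex : ∃ x, ε ≤ h x
  · obtain ⟨x, hx⟩ := hex
    have hKc : IsCompact K := isCompact_Icc.inter_right (isClosed_le continuous_const hh)
    obtain ⟨y₀, hy₀, -⟩ := hreduce x hx
    obtain ⟨x₀, hx₀, hmax⟩ := hKc.exists_isMaxOn ⟨y₀, hy₀⟩ hb.continuousOn
    refine ⟨b x₀, hlt x₀ hx₀.2, fun x hx => ?_⟩
    obtain ⟨y, hy, hxy⟩ := hreduce x hx
    exact hxy ▸ hmax hy
  · exact ⟨a - 1, by linarith, fun x hx => (hex ⟨x, hx⟩).elim⟩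

/-- The paper's `q̄ = q c + (q c)~`, with a trigonometric polynomial `c` in place of the smooth
cutoff `c_τ`. -/
def symmetrize (c q : ℝ → ℂ) : ℝ → ℂ := q * c + flipF (q * c)

lemma symmetrize_mem_tQCset {c q : ℝ → ℂ} (hc : c ∈ trigPoly) (hq : q ∈ QCset) :
    symmetrize c q ∈ tQCset :=
  ⟨QCset_add (QCset_mul_trigPoly hc hq) (flipF_mem_QCset (QCset_mul_trigPoly hc hq)),
    by rw [symmetrize, flipF_add, flipF_flipF, add_comm]⟩

def symmetrizeDefect (c : ℝ → ℂ) (x : ℝ) : ℝ := ‖1 - c x‖ + ‖c (-x)‖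

lemma norm_sub_symmetrize_le {c q : ℝ → ℂ} {M : ℝ} (hq : ∀ x, ‖q x‖ ≤ M) (x : ℝ) :
    ‖(q - symmetrize c q) x‖ ≤ M * symmetrizeDefect c x := by
  have hval : (q - symmetrize c q) x = q x * (1 - c x) - q (-x) * c (-x) := by
    simp only [symmetrize, flipF, Pi.sub_apply, Pi.add_apply, Pi.mul_apply]; ring
  rw [hval, symmetrizeDefect, mul_add]
  refine (norm_sub_le _ _).trans (add_le_add ?_ ?_) <;> rw [norm_mul] <;>
    exact mul_le_mul_of_nonneg_right (hq _) (norm_nonneg _)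

lemma continuous_symmetrizeDefect {c : ℝ → ℂ} (hc : Continuous c) :
    Continuous (symmetrizeDefect c) := by
  unfold symmetrizeDefect; fun_prop

lemma symmetrizeDefect_periodic {c : ℝ → ℂ} {T : ℝ} (hc : Function.Periodic c T) :
    Function.Periodic (symmetrizeDefect c) T := fun x => by
  simp only [symmetrizeDefect, hc x, neg_add, ← sub_eq_add_neg, hc.sub_eq]

lemma symmetrizeDefect_cosBumpPow_le_two (θ : ℝ) (m : ℕ) (x : ℝ) :
    symmetrizeDefect (cosBumpPow θ m) x ≤ 2 := by
  have h1 := norm_one_sub_cosBumpPow_le θ m x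
  have h2 : ‖cosBumpPow θ m (-x)‖ ≤ 1 := (norm_cosBumpPow θ m (-x)).trans_le
    (pow_le_one₀ (cosBump_nonneg θ _) (cosBump_le_one θ _))
  unfold symmetrizeDefect
  linarith

lemma symmetrizeDefect_cosBumpPow_of_cosBump_eq_one {θ x : ℝ} (hx : cosBump θ x = 1) (m : ℕ) :
    symmetrizeDefect (cosBumpPow θ m) x = cosBump θ (-θ) ^ m := by
  obtain ⟨k, rfl⟩ := exists_eq_add_of_cosBump_eq_one hx
  have hT : Function.Periodic (cosBumpPow θ m) (2 * π) :=
    (trigPoly_le_ctsSubalgebra (cosBumpPow_mem_trigPoly θ m)).1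
  rw [symmetrizeDefect, (hT.int_mul k) θ, neg_add, ← sub_eq_add_neg, hT.sub_int_mul_eq,
    cosBumpPow_self, sub_self, norm_zero, zero_add, norm_cosBumpPow]

/-- Where the bump equals `1` the defect is `cosBump θ (-θ) ^ m < δ`; compactness spreads this to a
superlevel set `{r < cosBump θ}`. -/
lemma exists_cosBump_le_of_le_symmetrizeDefect {θ : ℝ} (hθ : Real.sin θ ≠ 0) {δ : ℝ}
    (hδ : 0 < δ) : ∃ m : ℕ, ∃ r < 1,
      ∀ x, δ ≤ symmetrizeDefect (cosBumpPow θ m) x → cosBump θ x ≤ r := by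
  obtain ⟨m, hm⟩ := exists_pow_lt_of_lt_one hδ (cosBump_neg_self_lt_one hθ)
  have hc : cosBumpPow θ m ∈ CtsT := trigPoly_le_ctsSubalgebra (cosBumpPow_mem_trigPoly θ m)
  refine ⟨m, exists_lt_forall_le_of_periodic two_pi_pos (continuous_cosBump θ)
    (cosBump_periodic θ) (continuous_symmetrizeDefect hc.2) (symmetrizeDefect_periodic hc.1)
    fun x hx => (cosBump_le_one θ x).lt_of_ne fun h1 => ?_⟩
  exact hx.not_gt ((symmetrizeDefect_cosBumpPow_of_cosBump_eq_one h1 m).trans_lt hm)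

lemma IsChar.map_sub {ξ : (ℝ → ℂ) → ℂ} (hξ : IsChar QCset ξ) {p q : ℝ → ℂ} (hp : p ∈ QCset)
    (hq : q ∈ QCset) : ξ (p - q) = ξ p - ξ q := by
  obtain ⟨hadd, -, hsmul, -, -⟩ := hξ
  rw [sub_eq_add_neg, ← neg_one_smul ℂ q, hadd p hp _ (QCset_smul (-1) hq), hsmul (-1) q hq]
  ring

/-- `ξ f = ξ (f g)`, since `ξ g = g θ = 1`. -/
lemma InFiber.norm_le_of_mul_le {θ : ℝ} {ξ : (ℝ → ℂ) → ℂ} (hξ : InFiber QCset θ ξ)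
    {f g : ℝ → ℂ} (hf : f ∈ QCset) (hg : g ∈ trigPoly) (hgθ : g θ = 1) {C : ℝ}
    (hC : ∀ x, ‖f x * g x‖ ≤ C) : ‖ξ f‖ ≤ C := by
  obtain ⟨⟨-, hmul, -, -, hbound⟩, hfib⟩ := hξ
  have hgC : g ∈ CtsT := trigPoly_le_ctsSubalgebra hg
  have hgQ : g ∈ QCset := CtsT_subset_QCset hgC
  have hfg : ξ f = ξ (f * g) := by rw [hmul f hf g hgQ, hfib g ⟨hgC, hgQ⟩, hgθ, mul_one]
  exact hfg ▸ hbound _ (QCset_mul_trigPoly hg hf) C hC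

lemma exists_tQCset_sub_mul_trigPoly_le {θ : ℝ} (hθ : Real.sin θ ≠ 0) {q : ℝ → ℂ}
    (hq : q ∈ QCset) {ε : ℝ} (hε : 0 < ε) :
    ∃ p ∈ tQCset, ∃ g ∈ trigPoly, g θ = 1 ∧ ∀ x, ‖(q - p) x * g x‖ ≤ ε := by
  obtain ⟨-, -, C, hC⟩ := QCset_subset_LinfT hq
  set M := max C 1
  have hM : 0 < M := zero_lt_one.trans_le (le_max_right C 1)
  have hqM : ∀ x, ‖q x‖ ≤ M := fun x => (hC x).trans (le_max_left C 1)
  obtain ⟨m, r, hr1, hr⟩ := exists_cosBump_le_of_le_symmetrizeDefect hθ (div_pos hε hM)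
  obtain ⟨n, hn⟩ := exists_pow_lt_of_lt_one (half_pos (div_pos hε hM)) hr1
  set c := cosBumpPow θ m
  refine ⟨symmetrize c q, symmetrize_mem_tQCset (cosBumpPow_mem_trigPoly θ m) hq, cosBumpPow θ n,
    cosBumpPow_mem_trigPoly θ n, cosBumpPow_self θ n, fun x => ?_⟩
  rw [norm_mul, norm_cosBumpPow]
  have hqp : ‖(q - symmetrize c q) x‖ ≤ M * symmetrizeDefect c x := norm_sub_symmetrize_le hqM x
  have hg0 : 0 ≤ cosBump θ x ^ n := pow_nonneg (cosBump_nonneg θ x) n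
  rcases lt_or_ge (symmetrizeDefect c x) (ε / M) with hx | hx
  · calc _ ≤ M * symmetrizeDefect c x * 1 :=
          mul_le_mul hqp (pow_le_one₀ (cosBump_nonneg θ x) (cosBump_le_one θ x)) hg0
            ((norm_nonneg _).trans hqp)
      _ ≤ M * (ε / M) := by rw [mul_one]; gcongr
      _ = ε := mul_div_cancel₀ ε hM.ne'
  · calc _ ≤ M * symmetrizeDefect c x * (ε / M / 2) :=
          mul_le_mul hqp ((pow_le_pow_left₀ (cosBump_nonneg θ x) (hr x hx) n).trans hn.le) hg0
            ((norm_nonneg _).trans hqp)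
      _ ≤ M * 2 * (ε / M / 2) := by gcongr; exact symmetrizeDefect_cosBumpPow_le_two θ m x
      _ = ε := by field_simp

/-- Let `τ = e^{iθ}` with `Im τ > 0` (i.e. `0 < θ < π`). If `ξ₁, ξ₂ ∈ M_τ(QC)` agree on the
even quasicontinuous functions `Q̃C`, then `ξ₁ = ξ₂` (as characters of `QC`). -/
theorem fiber_chars_agree_upper (θ : ℝ) (hθ : 0 < θ ∧ θ < π)
    (ξ₁ ξ₂ : (ℝ → ℂ) → ℂ) (h₁ : InFiber QCset θ ξ₁) (h₂ : InFiber QCset θ ξ₂)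
    (hagree : ∀ q ∈ tQCset, ξ₁ q = ξ₂ q) :
    ∀ q ∈ QCset, ξ₁ q = ξ₂ q := by
  intro q hq
  refine eq_of_forall_dist_le fun ε hε => ?_
  obtain ⟨p, hp, g, hg, hgθ, hpg⟩ :=
    exists_tQCset_sub_mul_trigPoly_le (Real.sin_pos_of_pos_of_lt_pi hθ.1 hθ.2).ne' hq (half_pos hε)
  have hqp : q - p ∈ QCset := QCset_sub hq hp.1
  calc dist (ξ₁ q) (ξ₂ q) = ‖ξ₁ (q - p) - ξ₂ (q - p)‖ := by
        rw [dist_eq_norm, h₁.1.map_sub hq hp.1, h₂.1.map_sub hq hp.1, hagree p hp,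
          sub_sub_sub_cancel_right]
    _ ≤ ‖ξ₁ (q - p)‖ + ‖ξ₂ (q - p)‖ := norm_sub_le _ _
    _ ≤ ε / 2 + ε / 2 :=
        add_le_add (h₁.norm_le_of_mul_le hqp hg hgθ hpg) (h₂.norm_le_of_mul_le hqp hg hgθ hpg)
    _ = ε := add_halves ε
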